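/- arXiv:1906.04491 — 3 statements merged into one kernel-verified Lean document; each statement's English description precedes it below -/
import Mathlib

section
/- For every closed Proc term p of deACPei there exists a head normal form q such that the equation p = q is derivable from the axioms of deACPei. Here the set of head normal forms is the least set of closed Proc terms containing δ, containing φ:→ε for every closed Cond term φ, containing φ:→(α·p') for every closed Cond term φ, every action α, and every closed Proc term p', and closed under alternative composition +. -/
namespace DeACPei

/-- Flexible variables: a countably infinite set. -/
abbrev FlexVar := ℕ

/-- A data signature: function symbols with arities and relation symbols with arities
(relation symbols other than equality are only used where the context provides them). -/
structure DataSig where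
  F : Type
  ar : F → ℕ
  R : Type
  rar : R → ℕ

/-- Data terms: logical data variables, flexible variables (as constants of sort Data),
and applications of function symbols. -/
inductive DTerm (S : DataSig) : Type where
  | dvar : ℕ → DTerm S
  | fvar : FlexVar → DTerm S
  | app : (f : S.F) → (Fin (S.ar f) → DTerm S) → DTerm S

/-- An algebra for a data signature. -/
structure DataAlg (S : DataSig) where
  D : Type
  interpF : (f : S.F) → (Fin (S.ar f) → D) → D
  interpR : (r : S.R) → (Fin (S.rar r) → D) → Prop

variable {S : DataSig}

namespace DTerm

/-- No (logical) data variables occur. -/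
def NoDVar : DTerm S → Prop
  | dvar _ => False
  | fvar _ => True
  | app _ ts => ∀ i, (ts i).NoDVar

/-- No flexible variables occur. -/
def NoFVar : DTerm S → Prop
  | dvar _ => True
  | fvar _ => False
  | app _ ts => ∀ i, (ts i).NoFVar

/-- A data value: a closed term over the data signature proper. -/
def IsVal (e : DTerm S) : Prop := e.NoDVar ∧ e.NoFVar

/-- The flexible variables occurring in a data term. -/
def fvars : DTerm S → Finset FlexVar
  | dvar _ => ∅
  | fvar v => {v}
  | app _ ts => Finset.univ.sup fun i => (ts i).fvars

/-- The (logical) data variables occurring in a data term. -/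
def dvars : DTerm S → Finset ℕ
  | dvar n => {n}
  | fvar _ => ∅
  | app _ ts => Finset.univ.sup fun i => (ts i).dvars

/-- Evaluation of a data term in an algebra, given assignments for the data variables
and the flexible variables. -/
def evalD (A : DataAlg S) (ν : ℕ → A.D) (μ : FlexVar → A.D) : DTerm S → A.D
  | dvar n => ν n
  | fvar v => μ v
  | app f ts => A.interpF f fun i => (ts i).evalD A ν μ

/-- Substitute the flexible variable `v` by the data term `t`. -/
def substFV (v : FlexVar) (t : DTerm S) : DTerm S → DTerm S
  | dvar n => dvar n
  | fvar w => if w = v then t else fvar w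
  | app f ts => app f fun i => substFV v t (ts i)

/-- Substitute data variables according to `θ`. -/
def substDV (θ : ℕ → DTerm S) : DTerm S → DTerm S
  | dvar n => θ n
  | fvar w => fvar w
  | app f ts => app f fun i => (ts i).substDV θ

end DTerm

/-- The set of data values. -/
def DVal (S : DataSig) := { e : DTerm S // e.IsVal }

/-- An evaluation map: a function from flexible variables to data values or flexible
variables (`none` meaning that the variable is mapped to itself, i.e. unevaluated). -/
def EvalMap (S : DataSig) := FlexVar → Option (DVal S)

/-- Extension of an evaluation map to data terms. -/
def DTerm.applyEval (σ : EvalMap S) : DTerm S → DTerm S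
  | .dvar n => .dvar n
  | .fvar v => match σ v with
      | some t => t.val
      | none => .fvar v
  | .app f ts => .app f fun i => (ts i).applyEval σ

open Classical in
/-- `σ[t/v]`: the evaluation map updated to send `v` to `t`. -/
noncomputable def EvalMap.upd (σ : EvalMap S) (v : FlexVar) (t : DTerm S) : EvalMap S :=
  fun w => if w = v then (if h : t.IsVal then some ⟨t, h⟩ else none) else σ w

/-- A `V`-evaluation map: `σ v` is a data value iff `v ∈ V`. -/
def EvalMap.IsVMap (σ : EvalMap S) (V : Finset FlexVar) : Prop :=
  ∀ v, (σ v).isSome ↔ v ∈ V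

/-- Conditions: condition variables, equality of data terms, relation symbols, truth,
falsity, the usual connectives, and quantification over data (binding a data variable). -/
inductive CTerm (S : DataSig) : Type where
  | cvar : ℕ → CTerm S
  | eq : DTerm S → DTerm S → CTerm S
  | rel : (r : S.R) → (Fin (S.rar r) → DTerm S) → CTerm S
  | tt : CTerm S
  | ff : CTerm S
  | not : CTerm S → CTerm S
  | and : CTerm S → CTerm S → CTerm S
  | or : CTerm S → CTerm S → CTerm S
  | imp : CTerm S → CTerm S → CTerm S
  | all : ℕ → CTerm S → CTerm S
  | ex : ℕ → CTerm S → CTerm S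

namespace CTerm

/-- No condition variables occur. -/
def NoCVar : CTerm S → Prop
  | cvar _ => False
  | eq _ _ => True
  | rel _ _ => True
  | tt => True
  | ff => True
  | not φ => φ.NoCVar
  | and φ ψ => φ.NoCVar ∧ ψ.NoCVar
  | or φ ψ => φ.NoCVar ∧ ψ.NoCVar
  | imp φ ψ => φ.NoCVar ∧ ψ.NoCVar
  | all _ φ => φ.NoCVar
  | ex _ φ => φ.NoCVar

/-- The free (logical) data variables of a condition. -/
def fdvars : CTerm S → Finset ℕ
  | cvar _ => ∅
  | eq e e' => e.dvars ∪ e'.dvars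
  | rel _ ts => Finset.univ.sup fun i => (ts i).dvars
  | tt => ∅
  | ff => ∅
  | not φ => φ.fdvars
  | and φ ψ => φ.fdvars ∪ ψ.fdvars
  | or φ ψ => φ.fdvars ∪ ψ.fdvars
  | imp φ ψ => φ.fdvars ∪ ψ.fdvars
  | all n φ => φ.fdvars.erase n
  | ex n φ => φ.fdvars.erase n

/-- The flexible variables occurring in a condition. -/
def fvars : CTerm S → Finset FlexVar
  | cvar _ => ∅
  | eq e e' => e.fvars ∪ e'.fvars
  | rel _ ts => Finset.univ.sup fun i => (ts i).fvars
  | tt => ∅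
  | ff => ∅
  | not φ => φ.fvars
  | and φ ψ => φ.fvars ∪ ψ.fvars
  | or φ ψ => φ.fvars ∪ ψ.fvars
  | imp φ ψ => φ.fvars ∪ ψ.fvars
  | all _ φ => φ.fvars
  | ex _ φ => φ.fvars

/-- A closed condition: no condition variables and no free data variables
(flexible variables may occur). -/
def Closed (φ : CTerm S) : Prop := φ.NoCVar ∧ φ.fdvars = ∅

/-- Satisfaction of a condition in a data algebra, given assignments for the data
variables and the flexible variables (flexible variables being read as data variables);
condition variables are never satisfied. -/
def holds (A : DataAlg S) (μ : FlexVar → A.D) : (ν : ℕ → A.D) → CTerm S → Prop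
  | _, cvar _ => False
  | ν, eq e e' => e.evalD A ν μ = e'.evalD A ν μ
  | ν, rel r ts => A.interpR r fun i => (ts i).evalD A ν μ
  | _, tt => True
  | _, ff => False
  | ν, not φ => ¬ holds A μ ν φ
  | ν, and φ ψ => holds A μ ν φ ∧ holds A μ ν ψ
  | ν, or φ ψ => holds A μ ν φ ∨ holds A μ ν ψ
  | ν, imp φ ψ => holds A μ ν φ → holds A μ ν ψ
  | ν, all n φ => ∀ d, holds A μ (Function.update ν n d) φ
  | ν, ex n φ => ∃ d, holds A μ (Function.update ν n d) φ

/-- Extension of an evaluation map to conditions. -/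
def applyEval (σ : EvalMap S) : CTerm S → CTerm S
  | cvar n => cvar n
  | eq e e' => eq (e.applyEval σ) (e'.applyEval σ)
  | rel r ts => rel r fun i => (ts i).applyEval σ
  | tt => tt
  | ff => ff
  | not φ => not (φ.applyEval σ)
  | and φ ψ => and (φ.applyEval σ) (ψ.applyEval σ)
  | or φ ψ => or (φ.applyEval σ) (ψ.applyEval σ)
  | imp φ ψ => imp (φ.applyEval σ) (ψ.applyEval σ)
  | all n φ => all n (φ.applyEval σ)
  | ex n φ => ex n (φ.applyEval σ)

/-- Substitute the flexible variable `v` by the data term `t` in a condition. -/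
def substFV (v : FlexVar) (t : DTerm S) : CTerm S → CTerm S
  | cvar n => cvar n
  | eq e e' => eq (e.substFV v t) (e'.substFV v t)
  | rel r ts => rel r fun i => (ts i).substFV v t
  | tt => tt
  | ff => ff
  | not φ => not (φ.substFV v t)
  | and φ ψ => and (φ.substFV v t) (ψ.substFV v t)
  | or φ ψ => or (φ.substFV v t) (ψ.substFV v t)
  | imp φ ψ => imp (φ.substFV v t) (ψ.substFV v t)
  | all n φ => all n (φ.substFV v t)
  | ex n φ => ex n (φ.substFV v t)

/-- Substitute data variables according to `θ` in a condition (capture is avoided since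
`θ` is only used with closed data terms). -/
def substDV (θ : ℕ → DTerm S) : CTerm S → CTerm S
  | cvar n => cvar n
  | eq e e' => eq (e.substDV θ) (e'.substDV θ)
  | rel r ts => rel r fun i => (ts i).substDV θ
  | tt => tt
  | ff => ff
  | not φ => not (φ.substDV θ)
  | and φ ψ => and (φ.substDV θ) (ψ.substDV θ)
  | or φ ψ => or (φ.substDV θ) (ψ.substDV θ)
  | imp φ ψ => imp (φ.substDV θ) (ψ.substDV θ)
  | all n φ => all n (φ.substDV (Function.update θ n (.dvar n)))
  | ex n φ => ex n (φ.substDV (Function.update θ n (.dvar n)))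

end CTerm

/-- A condition is satisfiable in the data algebra (flexible variables read as
data variables). -/
def SatC (A : DataAlg S) (φ : CTerm S) : Prop :=
  ∃ (μ : FlexVar → A.D) (ν : ℕ → A.D), φ.holds A μ ν

end DeACPei
namespace DeACPei

variable {S : DataSig}

/-- Process terms of deACPei over a set `Act` of basic actions and a data signature. -/
inductive PTerm (Act : Type) (S : DataSig) : Type where
  | pvar : ℕ → PTerm Act S
  | delta : PTerm Act S
  | eps : PTerm Act S
  | act : Act → PTerm Act S
  | pact : Act → (n : ℕ) → (Fin n → DTerm S) → PTerm Act S
  | assign : FlexVar → DTerm S → PTerm Act S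
  | alt : PTerm Act S → PTerm Act S → PTerm Act S
  | seq : PTerm Act S → PTerm Act S → PTerm Act S
  | iter : PTerm Act S → PTerm Act S → PTerm Act S
  | par : PTerm Act S → PTerm Act S → PTerm Act S
  | lm : PTerm Act S → PTerm Act S → PTerm Act S
  | cm : PTerm Act S → PTerm Act S → PTerm Act S
  | encap : Set Act → PTerm Act S → PTerm Act S
  | gc : CTerm S → PTerm Act S → PTerm Act S
  | eval : EvalMap S → PTerm Act S → PTerm Act S

variable {Act : Type}

/-- Interpretation of the constants of `A ∪ {δ}`. -/
def actd : Option Act → PTerm Act S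
  | none => .delta
  | some a => .act a

namespace PTerm

/-- A closed process term: no process variables, and all occurring data terms and
conditions are closed. -/
def Closed : PTerm Act S → Prop
  | pvar _ => False
  | delta => True
  | eps => True
  | act _ => True
  | pact _ _ es => ∀ i, (es i).NoDVar
  | assign _ e => e.NoDVar
  | alt p q => p.Closed ∧ q.Closed
  | seq p q => p.Closed ∧ q.Closed
  | iter p q => p.Closed ∧ q.Closed
  | par p q => p.Closed ∧ q.Closed
  | lm p q => p.Closed ∧ q.Closed
  | cm p q => p.Closed ∧ q.Closed
  | encap _ p => p.Closed
  | gc φ p => φ.Closed ∧ p.Closed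
  | eval _ p => p.Closed

/-- No evaluation operator, left merge or communication merge occurs. -/
def NoELC : PTerm Act S → Prop
  | pvar _ => True
  | delta => True
  | eps => True
  | act _ => True
  | pact _ _ _ => True
  | assign _ _ => True
  | alt p q => p.NoELC ∧ q.NoELC
  | seq p q => p.NoELC ∧ q.NoELC
  | iter p q => p.NoELC ∧ q.NoELC
  | par p q => p.NoELC ∧ q.NoELC
  | lm _ _ => False
  | cm _ _ => False
  | encap _ p => p.NoELC
  | gc _ p => p.NoELC
  | eval _ _ => False

/-- `FVar(p)`: the flexible variables occurring in a process term. -/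
def fvars : PTerm Act S → Finset FlexVar
  | pvar _ => ∅
  | delta => ∅
  | eps => ∅
  | act _ => ∅
  | pact _ _ es => Finset.univ.sup fun i => (es i).fvars
  | assign v e => {v} ∪ e.fvars
  | alt p q => p.fvars ∪ q.fvars
  | seq p q => p.fvars ∪ q.fvars
  | iter p q => p.fvars ∪ q.fvars
  | par p q => p.fvars ∪ q.fvars
  | lm p q => p.fvars ∪ q.fvars
  | cm p q => p.fvars ∪ q.fvars
  | encap _ p => p.fvars
  | gc φ p => φ.fvars ∪ p.fvars
  | eval _ p => p.fvars

/-- `FAss(p)`: the flexible variables occurring in assignment position in a process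
term. -/
def fass : PTerm Act S → Finset FlexVar
  | pvar _ => ∅
  | delta => ∅
  | eps => ∅
  | act _ => ∅
  | pact _ _ _ => ∅
  | assign v _ => {v}
  | alt p q => p.fass ∪ q.fass
  | seq p q => p.fass ∪ q.fass
  | iter p q => p.fass ∪ q.fass
  | par p q => p.fass ∪ q.fass
  | lm p q => p.fass ∪ q.fass
  | cm p q => p.fass ∪ q.fass
  | encap _ p => p.fass
  | gc _ p => p.fass
  | eval _ p => p.fass

end PTerm

/-- An H-term: a closed process term in which no evaluation operator, left merge or
communication merge occurs. -/
def IsHTerm (p : PTerm Act S) : Prop := p.Closed ∧ p.NoELC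

/-- The actions of deACPei: basic actions, data-parameterized actions, and assignment
actions. -/
inductive PAct (Act : Type) (S : DataSig) : Type where
  | base : Act → PAct Act S
  | param : Act → (n : ℕ) → (Fin n → DTerm S) → PAct Act S
  | asg : FlexVar → DTerm S → PAct Act S

/-- The process term corresponding to an action. -/
def PAct.toP : PAct Act S → PTerm Act S
  | .base a => .act a
  | .param a n es => .pact a n es
  | .asg v e => .assign v e

/-- An action all of whose data parameters are closed data terms. -/
def PAct.Closed : PAct Act S → Prop
  | .base _ => True
  | .param _ _ es => ∀ i, (es i).NoDVar
  | .asg _ e => e.NoDVar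

/-- The condition `e₁ = e'₁ ∧ … ∧ eₙ = e'ₙ`. -/
def eqConj {n : ℕ} (es es' : Fin n → DTerm S) : CTerm S :=
  (List.ofFn fun i => CTerm.eq (es i) (es' i)).foldr .and .tt

end DeACPei
namespace DeACPei

variable {S : DataSig} {Act : Type}

/-- Derivability of equations between data terms: equational logic together with the
axiom IMP1 (`e = e'` for data terms without data variables that are equal in the data
algebra, flexible variables being read as data variables). -/
inductive DerivD (A : DataAlg S) : DTerm S → DTerm S → Prop where
  | refl (e) : DerivD A e e
  | symm : DerivD A e e' → DerivD A e' e
  | trans : DerivD A e e' → DerivD A e' e'' → DerivD A e e''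
  | congr (f) {ts ts' : Fin (S.ar f) → DTerm S} :
      (∀ i, DerivD A (ts i) (ts' i)) → DerivD A (.app f ts) (.app f ts')
  | imp1 {e e' : DTerm S} : e.NoDVar → e'.NoDVar →
      (∀ ν μ, e.evalD A ν μ = e'.evalD A ν μ) → DerivD A e e'

/-- Derivability of equations between conditions: equational logic together with the
axiom IMP2 (`φ = ψ` for conditions without condition variables such that `φ ↔ ψ` holds
in the data algebra, flexible variables being read as data variables). -/
inductive DerivC (A : DataAlg S) : CTerm S → CTerm S → Prop where
  | refl (φ) : DerivC A φ φ
  | symm : DerivC A φ ψ → DerivC A ψ φ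
  | trans : DerivC A φ ψ → DerivC A ψ χ → DerivC A φ χ
  | congr_eq : DerivD A e₁ e₁' → DerivD A e₂ e₂' → DerivC A (.eq e₁ e₂) (.eq e₁' e₂')
  | congr_rel (r) {ts ts' : Fin (S.rar r) → DTerm S} :
      (∀ i, DerivD A (ts i) (ts' i)) → DerivC A (.rel r ts) (.rel r ts')
  | congr_not : DerivC A φ φ' → DerivC A (.not φ) (.not φ')
  | congr_and : DerivC A φ φ' → DerivC A ψ ψ' → DerivC A (.and φ ψ) (.and φ' ψ')
  | congr_or : DerivC A φ φ' → DerivC A ψ ψ' → DerivC A (.or φ ψ) (.or φ' ψ')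
  | congr_imp : DerivC A φ φ' → DerivC A ψ ψ' → DerivC A (.imp φ ψ) (.imp φ' ψ')
  | congr_all (n) : DerivC A φ φ' → DerivC A (.all n φ) (.all n φ')
  | congr_ex (n) : DerivC A φ φ' → DerivC A (.ex n φ) (.ex n φ')
  | imp2 {φ ψ : CTerm S} : φ.NoCVar → ψ.NoCVar →
      (∀ μ ν, φ.holds A μ ν ↔ ψ.holds A μ ν) → DerivC A φ ψ

/-- Derivability of equations between process terms from the axioms of deACPei. -/
inductive DerivP (γ : Option Act → Option Act → Option Act) (A : DataAlg S) :
    PTerm Act S → PTerm Act S → Prop where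
  | refl (p) : DerivP γ A p p
  | symm : DerivP γ A p q → DerivP γ A q p
  | trans : DerivP γ A p q → DerivP γ A q r → DerivP γ A p r
  | congr_pact (a n) {es es' : Fin n → DTerm S} :
      (∀ i, DerivD A (es i) (es' i)) → DerivP γ A (.pact a n es) (.pact a n es')
  | congr_assign (v) : DerivD A e e' → DerivP γ A (.assign v e) (.assign v e')
  | congr_alt : DerivP γ A p p' → DerivP γ A q q' → DerivP γ A (.alt p q) (.alt p' q')
  | congr_seq : DerivP γ A p p' → DerivP γ A q q' → DerivP γ A (.seq p q) (.seq p' q')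
  | congr_iter : DerivP γ A p p' → DerivP γ A q q' → DerivP γ A (.iter p q) (.iter p' q')
  | congr_par : DerivP γ A p p' → DerivP γ A q q' → DerivP γ A (.par p q) (.par p' q')
  | congr_lm : DerivP γ A p p' → DerivP γ A q q' → DerivP γ A (.lm p q) (.lm p' q')
  | congr_cm : DerivP γ A p p' → DerivP γ A q q' → DerivP γ A (.cm p q) (.cm p' q')
  | congr_encap (H) : DerivP γ A p p' → DerivP γ A (.encap H p) (.encap H p')
  | congr_gc : DerivC A φ φ' → DerivP γ A p p' → DerivP γ A (.gc φ p) (.gc φ' p')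
  | congr_eval (σ) : DerivP γ A p p' → DerivP γ A (.eval σ p) (.eval σ p')
  -- A1-A9
  | A1 (x y) : DerivP γ A (.alt x y) (.alt y x)
  | A2 (x y z) : DerivP γ A (.alt (.alt x y) z) (.alt x (.alt y z))
  | A3 (x) : DerivP γ A (.alt x x) x
  | A4 (x y z) : DerivP γ A (.seq (.alt x y) z) (.alt (.seq x z) (.seq y z))
  | A5 (x y z) : DerivP γ A (.seq (.seq x y) z) (.seq x (.seq y z))
  | A6 (x) : DerivP γ A (.alt x .delta) x
  | A7 (x) : DerivP γ A (.seq .delta x) .delta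
  | A8 (x) : DerivP γ A (.seq x .eps) x
  | A9 (x) : DerivP γ A (.seq .eps x) x
  -- iteration
  | BKS1 (x y) : DerivP γ A (.iter x y) (.alt (.seq x (.iter x y)) y)
  | RSP (x y z) : DerivP γ A z (.alt (.seq x z) y) → DerivP γ A z (.iter x y)
  -- parallel composition
  | CM1T (x y) : DerivP γ A (.par x y)
      (.alt (.alt (.alt (.lm x y) (.lm y x)) (.cm x y))
        (.seq (.encap Set.univ x) (.encap Set.univ y)))
  | CM2T (x) : DerivP γ A (.lm .eps x) .delta
  | CM3 (a : Option Act) (x y) :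
      DerivP γ A (.lm (.seq (actd a) x) y) (.seq (actd a) (.par x y))
  | CM3D (a n es x y) :
      DerivP γ A (.lm (.seq (.pact a n es) x) y) (.seq (.pact a n es) (.par x y))
  | CM3A (v e x y) :
      DerivP γ A (.lm (.seq (.assign v e) x) y) (.seq (.assign v e) (.par x y))
  | CM4 (x y z) : DerivP γ A (.lm (.alt x y) z) (.alt (.lm x z) (.lm y z))
  | CM5T (x) : DerivP γ A (.cm .eps x) .delta
  | CM6T (x) : DerivP γ A (.cm x .eps) .delta
  | CM7 (a b : Option Act) (x y) :
      DerivP γ A (.cm (.seq (actd a) x) (.seq (actd b) y))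
        (.seq (actd (γ a b)) (.par x y))
  | CM7Da (a b c : Act) (n) (es es' : Fin n → DTerm S) (x y) :
      γ (some a) (some b) = some c →
      DerivP γ A (.cm (.seq (.pact a n es) x) (.seq (.pact b n es') y))
        (.gc (eqConj es es') (.seq (.pact c n es) (.par x y)))
  | CM7Db_comm (a b : Act) (n m es es' x y) : γ (some a) (some b) = none →
      DerivP γ A (.cm (.seq (.pact a n es) x) (.seq (.pact b m es') y)) .delta
  | CM7Db_len (a b : Act) (n m es es' x y) : n ≠ m →
      DerivP γ A (.cm (.seq (.pact a n es) x) (.seq (.pact b m es') y)) .delta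
  | CM7Dc (a : Act) (n es) (b : Option Act) (x y) :
      DerivP γ A (.cm (.seq (.pact a n es) x) (.seq (actd b) y)) .delta
  | CM7Dd (a : Option Act) (b : Act) (n es x y) :
      DerivP γ A (.cm (.seq (actd a) x) (.seq (.pact b n es) y)) .delta
  | CM5A (v e x y) : DerivP γ A (.cm (.seq (.assign v e) x) y) .delta
  | CM6A (v e x y) : DerivP γ A (.cm x (.seq (.assign v e) y)) .delta
  | CM8 (x y z) : DerivP γ A (.cm (.alt x y) z) (.alt (.cm x z) (.cm y z))
  | CM9 (x y z) : DerivP γ A (.cm x (.alt y z)) (.alt (.cm x y) (.cm x z))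
  -- encapsulation
  | D0 (H) : DerivP γ A (.encap H .eps) .eps
  | D1 (H) (a : Option Act) : (∀ b, a = some b → b ∉ H) →
      DerivP γ A (.encap H (actd a)) (actd a)
  | D2 (H) (a : Act) : a ∈ H → DerivP γ A (.encap H (.act a)) .delta
  | D1D (H) (a : Act) (n es) : a ∉ H →
      DerivP γ A (.encap H (.pact a n es)) (.pact a n es)
  | D2D (H) (a : Act) (n es) : a ∈ H → DerivP γ A (.encap H (.pact a n es)) .delta
  | D1A (H v e) : DerivP γ A (.encap H (.assign v e)) (.assign v e)
  | D3 (H x y) : DerivP γ A (.encap H (.alt x y)) (.alt (.encap H x) (.encap H y))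
  | D4 (H x y) : DerivP γ A (.encap H (.seq x y)) (.seq (.encap H x) (.encap H y))
  -- guarded commands
  | GC1 (x) : DerivP γ A (.gc .tt x) x
  | GC2 (x) : DerivP γ A (.gc .ff x) .delta
  | GC3 (φ) : DerivP γ A (.gc φ .delta) .delta
  | GC4 (φ x y) : DerivP γ A (.gc φ (.alt x y)) (.alt (.gc φ x) (.gc φ y))
  | GC5 (φ x y) : DerivP γ A (.seq (.gc φ x) y) (.gc φ (.seq x y))
  | GC6 (φ ψ x) : DerivP γ A (.gc φ (.gc ψ x)) (.gc (.and φ ψ) x)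
  | GC7 (φ ψ x) : DerivP γ A (.gc (.or φ ψ) x) (.alt (.gc φ x) (.gc ψ x))
  | GC8 (φ x y) : DerivP γ A (.lm (.gc φ x) y) (.gc φ (.lm x y))
  | GC9 (φ x y) : DerivP γ A (.cm (.gc φ x) y) (.gc φ (.cm x y))
  | GC10 (φ x y) : DerivP γ A (.cm x (.gc φ y)) (.gc φ (.cm x y))
  | GC11 (H φ x) : DerivP γ A (.encap H (.gc φ x)) (.gc φ (.encap H x))
  -- evaluation
  | V0 (σ) : DerivP γ A (.eval σ .eps) .eps
  | V1 (σ) (a : Option Act) (x) :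
      DerivP γ A (.eval σ (.seq (actd a) x)) (.seq (actd a) (.eval σ x))
  | V2 (σ a n es x) : DerivP γ A (.eval σ (.seq (.pact a n es) x))
      (.seq (.pact a n fun i => (es i).applyEval σ) (.eval σ x))
  | V3 (σ v e x) : DerivP γ A (.eval σ (.seq (.assign v e) x))
      (.seq (.assign v (e.applyEval σ)) (.eval (σ.upd v (e.applyEval σ)) x))
  | V4 (σ x y) : DerivP γ A (.eval σ (.alt x y)) (.alt (.eval σ x) (.eval σ y))
  | V5 (σ φ x) : DerivP γ A (.eval σ (.gc φ x)) (.gc (φ.applyEval σ) (.eval σ x))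

/-- Equivalence under `V`-evaluation: `V_σ(p) = V_σ(q)` is derivable for every
`V`-evaluation map `σ`. -/
def EvalEquiv (γ : Option Act → Option Act → Option Act) (A : DataAlg S)
    (V : Finset FlexVar) (p q : PTerm Act S) : Prop :=
  ∀ σ : EvalMap S, σ.IsVMap V → DerivP γ A (.eval σ p) (.eval σ q)

/-- A data algebra is minimal if every element is the value of a closed term over the
data signature. -/
def DataAlg.Minimal (A : DataAlg S) : Prop :=
  ∀ d : A.D, ∃ e : DTerm S, e.IsVal ∧ ∀ ν μ, e.evalD A ν μ = d

end DeACPei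

namespace DeACPei

/-- Head normal forms: the least set of closed process terms containing δ, containing
φ:→ε and φ:→(α·p) for closed conditions φ, actions α and closed process terms p, and
closed under alternative composition. -/
inductive HNF {Act : Type} {S : DataSig} : PTerm Act S → Prop where
  | delta : HNF .delta
  | eps (φ : CTerm S) : φ.Closed → HNF (.gc φ .eps)
  | act (φ : CTerm S) (α : PAct Act S) (p : PTerm Act S) :
      φ.Closed → α.Closed → p.Closed → HNF (.gc φ (.seq α.toP p))
  | alt {p q : PTerm Act S} : HNF p → HNF q → HNF (.alt p q)


/-! Every operator of deACPei preserves the existence of head normal forms: one inducts on the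
head normal forms of its arguments, distributes the operator over `+` and computes it on the
summands `φ :→ ε` and `φ :→ α · p`. Iteration is the one case that is not a rewrite of this
kind. Split the head normal form of `x` into its `ε`-summands, collected into a single
`Φ :→ ε`, and the rest `w`; then `BKS1` gives `x ⊛ y = (Φ :→ ε) · (x ⊛ y) + u` with
`u = w · (x ⊛ y) + y` a head normal form, so by `RSP*` both `x ⊛ y` and `(Φ :→ u) + u` equal
`(Φ :→ ε) ⊛ u`. -/

section

variable {Act : Type} {S : DataSig} {γ : Option Act → Option Act → Option Act} {A : DataAlg S}

lemma DTerm.NoDVar.dvars_eq_empty {e : DTerm S} (h : e.NoDVar) : e.dvars = ∅ := by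
  induction e with
  | dvar n => exact h.elim
  | fvar v => rfl
  | app f ts ih => exact (Finset.sup_eq_bot_iff _ _).2 fun i _ => ih i (h i)

lemma DTerm.NoDVar.applyEval (σ : EvalMap S) {e : DTerm S} (h : e.NoDVar) :
    (e.applyEval σ).NoDVar := by
  induction e with
  | dvar n => exact h.elim
  | fvar v =>
    simp only [DTerm.applyEval]
    cases σ v with
    | some t => exact t.property.1
    | none => trivial
  | app f ts ih => exact fun i => ih i (h i)

lemma DTerm.dvars_applyEval (σ : EvalMap S) (e : DTerm S) :
    (e.applyEval σ).dvars = e.dvars := by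
  induction e with
  | dvar n => rfl
  | fvar v =>
    simp only [DTerm.applyEval]
    cases σ v with
    | some t => exact t.property.1.dvars_eq_empty
    | none => rfl
  | app f ts ih => exact Finset.sup_congr rfl fun i _ => ih i

lemma CTerm.NoCVar.applyEval (σ : EvalMap S) {φ : CTerm S} (h : φ.NoCVar) :
    (φ.applyEval σ).NoCVar := by
  induction φ <;> simp_all [CTerm.NoCVar, CTerm.applyEval]

lemma CTerm.fdvars_applyEval (σ : EvalMap S) (φ : CTerm S) :
    (φ.applyEval σ).fdvars = φ.fdvars := by
  induction φ with
  | rel r ts => exact Finset.sup_congr rfl fun i _ => DTerm.dvars_applyEval σ (ts i)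
  | _ => simp_all [CTerm.applyEval, CTerm.fdvars, DTerm.dvars_applyEval]

lemma CTerm.Closed.applyEval (σ : EvalMap S) {φ : CTerm S} (h : φ.Closed) :
    (φ.applyEval σ).Closed :=
  ⟨h.1.applyEval σ, (CTerm.fdvars_applyEval σ φ).trans h.2⟩

lemma CTerm.closed_tt : (CTerm.tt (S := S)).Closed := ⟨trivial, rfl⟩

lemma CTerm.closed_ff : (CTerm.ff (S := S)).Closed := ⟨trivial, rfl⟩

lemma CTerm.Closed.and {φ ψ : CTerm S} (hφ : φ.Closed) (hψ : ψ.Closed) :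
    (CTerm.and φ ψ).Closed :=
  ⟨⟨hφ.1, hψ.1⟩, by simp [CTerm.fdvars, hφ.2, hψ.2]⟩

lemma CTerm.Closed.or {φ ψ : CTerm S} (hφ : φ.Closed) (hψ : ψ.Closed) :
    (CTerm.or φ ψ).Closed :=
  ⟨⟨hφ.1, hψ.1⟩, by simp [CTerm.fdvars, hφ.2, hψ.2]⟩

lemma eqConj_closed {n : ℕ} {es es' : Fin n → DTerm S}
    (h : ∀ i, (es i).NoDVar) (h' : ∀ i, (es' i).NoDVar) : (eqConj es es').Closed := by
  suffices ∀ l : List (CTerm S), (∀ φ ∈ l, φ.Closed) →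
      (l.foldr CTerm.and CTerm.tt).Closed by
    refine this _ fun φ hφ => ?_
    obtain ⟨i, rfl⟩ := List.mem_ofFn.1 hφ
    exact ⟨trivial, by simp [CTerm.fdvars, (h i).dvars_eq_empty, (h' i).dvars_eq_empty]⟩
  intro l hl
  induction l with
  | nil => exact CTerm.closed_tt
  | cons φ l ih =>
    exact (hl φ List.mem_cons_self).and (ih fun ψ hψ => hl ψ (List.mem_cons_of_mem _ hψ))

lemma PAct.Closed.toP {α : PAct Act S} (h : α.Closed) : α.toP.Closed := by
  cases α <;> exact h

lemma HNF.closed {p : PTerm Act S} (h : HNF p) : p.Closed := by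
  induction h with
  | delta => trivial
  | eps φ hφ => exact ⟨hφ, trivial⟩
  | act φ α p hφ hα hp => exact ⟨hφ, hα.toP, hp⟩
  | alt _ _ ih₁ ih₂ => exact ⟨ih₁, ih₂⟩

lemma DerivC.and_self {φ : CTerm S} (h : φ.NoCVar) : DerivC A (.and φ φ) φ :=
  .imp2 ⟨h, h⟩ h fun _ _ => and_self_iff

namespace DerivP

lemma delta_eq_gc_ff : DerivP γ A (.delta : PTerm Act S) (.gc .ff .eps) :=
  (GC2 .eps).symm

lemma gc_delta (φ : CTerm S) {p : PTerm Act S} (h : DerivP γ A p .delta) :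
    DerivP γ A (.gc φ p) .delta :=
  (congr_gc (.refl φ) h).trans (GC3 φ)

lemma gc_seq_assoc (φ : CTerm S) (α : PAct Act S) (p q : PTerm Act S) :
    DerivP γ A (.seq (.gc φ (.seq α.toP p)) q) (.gc φ (.seq α.toP (.seq p q))) :=
  (GC5 ..).trans (congr_gc (.refl φ) (A5 ..))

lemma alt_alt_comm (p q r s : PTerm Act S) :
    DerivP γ A (.alt (.alt p q) (.alt r s)) (.alt (.alt p r) (.alt q s)) :=
  (A2 ..).trans <| (congr_alt (.refl p) (A2 q r s).symm).trans <|
    (congr_alt (.refl p) (congr_alt (A1 q r) (.refl s))).trans <|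
      (congr_alt (.refl p) (A2 r q s)).trans (A2 p r (.alt q s)).symm

lemma seq_gc_ff_alt (z w : PTerm Act S) :
    DerivP γ A (.alt (.seq (.gc .ff .eps) z) w) w :=
  (congr_alt ((GC5 ..).trans (GC2 _)) (.refl w)).trans ((A1 ..).trans (A6 w))

/-- By `RSP*`, since `(Φ :→ u) + u` solves `z = (Φ :→ ε) · z + u`. -/
lemma gc_alt_eq_iter {Φ : CTerm S} (hΦ : Φ.NoCVar) (u : PTerm Act S) :
    DerivP γ A (.alt (.gc Φ u) u) (.iter (.gc Φ .eps) u) := by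
  have unfold : DerivP γ A (.seq (.gc Φ .eps) (.alt (.gc Φ u) u)) (.gc Φ u) :=
    (GC5 ..).trans <| (congr_gc (.refl Φ) (A9 _)).trans <| (GC4 ..).trans <|
      (congr_alt ((GC6 ..).trans (congr_gc (.and_self hΦ) (.refl u))) (.refl _)).trans (A3 _)
  exact RSP _ _ _ (congr_alt unfold (.refl u)).symm

end DerivP

namespace PAct

lemma encap_toP (H : Set Act) (α : PAct Act S) :
    DerivP γ A (.encap H α.toP) .delta ∨ DerivP γ A (.encap H α.toP) α.toP := by
  cases α with
  | base a =>
    by_cases ha : a ∈ H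
    · exact .inl (.D2 H a ha)
    · exact .inr (.D1 H (some a) fun b hb => Option.some_inj.1 hb ▸ ha)
  | param a n es =>
    by_cases ha : a ∈ H
    · exact .inl (.D2D H a n es ha)
    · exact .inr (.D1D H a n es ha)
  | asg v e => exact .inr (.D1A H v e)

lemma lm_seq (α : PAct Act S) (x y : PTerm Act S) :
    DerivP γ A (.lm (.seq α.toP x) y) (.seq α.toP (.par x y)) := by
  cases α with
  | base a => exact .CM3 (some a) x y
  | param a n es => exact .CM3D a n es x y
  | asg v e => exact .CM3A v e x y

lemma eval_seq (σ : EvalMap S) {α : PAct Act S} (hα : α.Closed) (x : PTerm Act S) :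
    ∃ (α' : PAct Act S) (σ' : EvalMap S), α'.Closed ∧
      DerivP γ A (.eval σ (.seq α.toP x)) (.seq α'.toP (.eval σ' x)) := by
  cases α with
  | base a => exact ⟨.base a, σ, trivial, .V1 σ (some a) x⟩
  | param a n es => exact ⟨.param a n _, σ, fun i => (hα i).applyEval σ, .V2 σ a n es x⟩
  | asg v e => exact ⟨.asg v _, _, hα.applyEval σ, .V3 σ v e x⟩

end PAct

def HasHNF (γ : Option Act → Option Act → Option Act) (A : DataAlg S) (p : PTerm Act S) :
    Prop :=
  ∃ q, HNF q ∧ DerivP γ A p q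

lemma HNF.hasHNF {p : PTerm Act S} (h : HNF p) : HasHNF γ A p :=
  ⟨p, h, .refl p⟩

namespace HasHNF

variable {p p' q : PTerm Act S}

lemma of_derivP (h : DerivP γ A p p') (h' : HasHNF γ A p') : HasHNF γ A p :=
  let ⟨r, hr, d⟩ := h'
  ⟨r, hr, h.trans d⟩

lemma of_derivP_delta (h : DerivP γ A p .delta) : HasHNF γ A p :=
  ⟨.delta, .delta, h⟩

lemma alt (hp : HasHNF γ A p) (hq : HasHNF γ A q) : HasHNF γ A (.alt p q) :=
  let ⟨p', hp', dp⟩ := hp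
  let ⟨q', hq', dq⟩ := hq
  ⟨.alt p' q', .alt hp' hq', .congr_alt dp dq⟩

lemma map {f : PTerm Act S → PTerm Act S}
    (hf : ∀ {p p'}, DerivP γ A p p' → DerivP γ A (f p) (f p'))
    (H : ∀ {p}, HNF p → HasHNF γ A (f p)) (hp : HasHNF γ A p) : HasHNF γ A (f p) :=
  let ⟨_, hp', dp⟩ := hp
  of_derivP (hf dp) (H hp')

lemma map₂ {f : PTerm Act S → PTerm Act S → PTerm Act S}
    (hf : ∀ {p p' q q'}, DerivP γ A p p' → DerivP γ A q q' → DerivP γ A (f p q) (f p' q'))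
    (H : ∀ {p q}, HNF p → HNF q → HasHNF γ A (f p q)) (hp : HasHNF γ A p)
    (hq : HasHNF γ A q) : HasHNF γ A (f p q) :=
  let ⟨_, hp', dp⟩ := hp
  let ⟨_, hq', dq⟩ := hq
  of_derivP (hf dp dq) (H hp' hq')

end HasHNF

lemma hasHNF_eps : HasHNF γ A (.eps : PTerm Act S) :=
  .of_derivP (DerivP.GC1 _).symm (HNF.eps .tt CTerm.closed_tt).hasHNF

lemma PAct.hasHNF_seq {α : PAct Act S} (hα : α.Closed) {x : PTerm Act S} (hx : x.Closed) :
    HasHNF γ A (.seq α.toP x) :=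
  .of_derivP (DerivP.GC1 _).symm (HNF.act .tt α x CTerm.closed_tt hα hx).hasHNF

lemma PAct.hasHNF {α : PAct Act S} (hα : α.Closed) : HasHNF γ A α.toP :=
  .of_derivP (DerivP.A8 _).symm (hasHNF_seq (x := .eps) hα trivial)

lemma HNF.hasHNF_gc {φ : CTerm S} (hφ : φ.Closed) {p : PTerm Act S} (hp : HNF p) :
    HasHNF γ A (.gc φ p) := by
  induction hp with
  | delta => exact .of_derivP_delta (.GC3 φ)
  | eps ψ hψ => exact .of_derivP (.GC6 ..) (HNF.eps _ (hφ.and hψ)).hasHNF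
  | act ψ α p hψ hα hp =>
    exact .of_derivP (.GC6 ..) (HNF.act _ α p (hφ.and hψ) hα hp).hasHNF
  | alt _ _ ih₁ ih₂ => exact .of_derivP (.GC4 ..) (ih₁.alt ih₂)

lemma HasHNF.gc {φ : CTerm S} (hφ : φ.Closed) {p : PTerm Act S} (hp : HasHNF γ A p) :
    HasHNF γ A (.gc φ p) :=
  hp.map (.congr_gc (.refl φ)) (·.hasHNF_gc hφ)

lemma HNF.hasHNF_seq {p q : PTerm Act S} (hp : HNF p) (hq : HNF q) :
    HasHNF γ A (.seq p q) := by
  induction hp with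
  | delta => exact .of_derivP_delta (.A7 q)
  | eps φ hφ =>
    exact .of_derivP ((DerivP.GC5 ..).trans (.congr_gc (.refl φ) (.A9 q))) (hq.hasHNF_gc hφ)
  | act φ α p hφ hα hp =>
    exact .of_derivP (.gc_seq_assoc ..)
      (HNF.act φ α (.seq p q) hφ hα ⟨hp, hq.closed⟩).hasHNF
  | alt _ _ ih₁ ih₂ => exact .of_derivP (.A4 ..) (ih₁.alt ih₂)

lemma HNF.hasHNF_encap (H : Set Act) {p : PTerm Act S} (hp : HNF p) :
    HasHNF γ A (.encap H p) := by
  induction hp with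
  | delta => exact .of_derivP_delta (.D1 H none fun _ h => nomatch h)
  | eps φ hφ =>
    exact .of_derivP ((DerivP.GC11 ..).trans (.congr_gc (.refl φ) (.D0 H))) (HNF.eps φ hφ).hasHNF
  | act φ α p hφ hα hp =>
    have d : DerivP γ A (.encap H (.gc φ (.seq α.toP p)))
        (.gc φ (.seq (.encap H α.toP) (.encap H p))) :=
      (DerivP.GC11 ..).trans (.congr_gc (.refl φ) (.D4 ..))
    rcases α.encap_toP H with hblocked | hpassed
    · exact .of_derivP_delta
        (d.trans (.gc_delta φ ((DerivP.congr_seq hblocked (.refl _)).trans (.A7 _))))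
    · exact .of_derivP (d.trans (.congr_gc (.refl φ) (.congr_seq hpassed (.refl _))))
        (HNF.act φ α (.encap H p) hφ hα hp).hasHNF
  | alt _ _ ih₁ ih₂ => exact .of_derivP (.D3 ..) (ih₁.alt ih₂)

lemma HNF.hasHNF_lm {p q : PTerm Act S} (hp : HNF p) (hq : q.Closed) :
    HasHNF γ A (.lm p q) := by
  have lm_eps : ∀ φ : CTerm S, DerivP γ A (.lm (.gc φ .eps) q) .delta :=
    fun φ => (DerivP.GC8 ..).trans (.gc_delta φ (.CM2T q))
  induction hp with
  | delta => exact .of_derivP_delta ((DerivP.congr_lm .delta_eq_gc_ff (.refl q)).trans (lm_eps _))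
  | eps φ _ => exact .of_derivP_delta (lm_eps φ)
  | act φ α x hφ hα hx =>
    exact .of_derivP ((DerivP.GC8 ..).trans (.congr_gc (.refl φ) (α.lm_seq x q)))
      (HNF.act φ α (.par x q) hφ hα ⟨hx, hq⟩).hasHNF
  | alt _ _ ih₁ ih₂ => exact .of_derivP (.CM4 ..) (ih₁.alt ih₂)

lemma PAct.hasHNF_cm_seq {α β : PAct Act S} (hα : α.Closed) (hβ : β.Closed)
    {x y : PTerm Act S} (hx : x.Closed) (hy : y.Closed) :
    HasHNF γ A (.cm (.seq α.toP x) (.seq β.toP y)) := by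
  cases α with
  | asg v e => exact .of_derivP_delta (.CM5A v e x _)
  | base a =>
    cases β with
    | asg v e => exact .of_derivP_delta (.CM6A v e _ y)
    | param b m es => exact .of_derivP_delta (.CM7Dd (some a) b m es x y)
    | base b =>
      have d := DerivP.CM7 (γ := γ) (A := A) (some a) (some b) x y
      rcases hc : γ (some a) (some b) with _ | c <;> rw [hc] at d
      · exact .of_derivP_delta (d.trans (.A7 _))
      · exact .of_derivP d (hasHNF_seq (α := .base c) (x := .par x y) trivial ⟨hx, hy⟩)
  | param a n es =>
    cases β with
    | asg v e => exact .of_derivP_delta (.CM6A v e _ y)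
    | base b => exact .of_derivP_delta (.CM7Dc a n es (some b) x y)
    | param b m es' =>
      by_cases hnm : n = m
      · subst hnm
        cases hc : γ (some a) (some b) with
        | none => exact .of_derivP_delta (.CM7Db_comm a b n n es es' x y hc)
        | some c =>
          exact .of_derivP (.CM7Da a b c n es es' x y hc)
            (HNF.act _ (.param c n es) (.par x y) (eqConj_closed hα hβ) hα ⟨hx, hy⟩).hasHNF
      · exact .of_derivP_delta (.CM7Db_len a b n m es es' x y hnm)

lemma HNF.hasHNF_cm_seq_left {α : PAct Act S} (hα : α.Closed) {x q : PTerm Act S}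
    (hx : x.Closed) (hq : HNF q) : HasHNF γ A (.cm (.seq α.toP x) q) := by
  have cm_eps : ∀ ψ : CTerm S, DerivP γ A (.cm (.seq α.toP x) (.gc ψ .eps)) .delta :=
    fun ψ => (DerivP.GC10 ..).trans (.gc_delta ψ (.CM6T _))
  induction hq with
  | delta => exact .of_derivP_delta ((DerivP.congr_cm (.refl _) .delta_eq_gc_ff).trans (cm_eps _))
  | eps ψ _ => exact .of_derivP_delta (cm_eps ψ)
  | act ψ β y hψ hβ hy =>
    exact .of_derivP (.GC10 ..) ((PAct.hasHNF_cm_seq hα hβ hx hy).gc hψ)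
  | alt _ _ ih₁ ih₂ => exact .of_derivP (.CM9 ..) (ih₁.alt ih₂)

lemma HNF.hasHNF_cm {p q : PTerm Act S} (hp : HNF p) (hq : HNF q) : HasHNF γ A (.cm p q) := by
  have cm_eps : ∀ φ : CTerm S, DerivP γ A (.cm (.gc φ .eps) q) .delta :=
    fun φ => (DerivP.GC9 ..).trans (.gc_delta φ (.CM5T q))
  induction hp with
  | delta => exact .of_derivP_delta ((DerivP.congr_cm .delta_eq_gc_ff (.refl q)).trans (cm_eps _))
  | eps φ _ => exact .of_derivP_delta (cm_eps φ)
  | act φ α x hφ hα hx => exact .of_derivP (.GC9 ..) ((hq.hasHNF_cm_seq_left hα hx).gc hφ)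
  | alt _ _ ih₁ ih₂ => exact .of_derivP (.CM8 ..) (ih₁.alt ih₂)

lemma HNF.hasHNF_eval (σ : EvalMap S) {p : PTerm Act S} (hp : HNF p) :
    HasHNF γ A (.eval σ p) := by
  induction hp with
  | delta =>
    exact .of_derivP_delta <| (DerivP.congr_eval σ .delta_eq_gc_ff).trans <|
      (DerivP.V5 ..).trans <| (DerivP.congr_gc (.refl _) (.V0 σ)).trans (.GC2 _)
  | eps φ hφ =>
    exact .of_derivP ((DerivP.V5 ..).trans (.congr_gc (.refl _) (.V0 σ)))
      (HNF.eps _ (hφ.applyEval σ)).hasHNF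
  | act φ α x hφ hα hx =>
    obtain ⟨α', σ', hα', d⟩ := α.eval_seq (γ := γ) (A := A) σ hα x
    exact .of_derivP ((DerivP.V5 ..).trans (.congr_gc (.refl _) d))
      (HNF.act _ α' (.eval σ' x) (hφ.applyEval σ) hα' hx).hasHNF
  | alt _ _ ih₁ ih₂ => exact .of_derivP (.V4 ..) (ih₁.alt ih₂)

/-- `Φ` is the disjunction of the guards of the `ε`-summands of `p`, and `w` collects the
remaining summands, each followed by `z`. -/
lemma HNF.exists_seq_eq_gc_eps_seq_alt {p z : PTerm Act S} (hp : HNF p) (hz : z.Closed) :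
    ∃ (Φ : CTerm S) (w : PTerm Act S), Φ.Closed ∧ HNF w ∧
      DerivP γ A (.seq p z) (.alt (.seq (.gc Φ .eps) z) w) := by
  induction hp with
  | delta =>
    exact ⟨.ff, .delta, CTerm.closed_ff, .delta,
      (DerivP.A7 z).trans (.symm (.seq_gc_ff_alt ..))⟩
  | eps φ hφ => exact ⟨φ, .delta, hφ, .delta, (DerivP.A6 _).symm⟩
  | act φ α p hφ hα hp =>
    exact ⟨.ff, _, CTerm.closed_ff, .act φ α (.seq p z) hφ hα ⟨hp, hz⟩,
      (DerivP.gc_seq_assoc ..).trans (.symm (.seq_gc_ff_alt ..))⟩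
  | alt _ _ ih₁ ih₂ =>
    obtain ⟨Φ₁, w₁, hΦ₁, hw₁, d₁⟩ := ih₁
    obtain ⟨Φ₂, w₂, hΦ₂, hw₂, d₂⟩ := ih₂
    have dΦ : DerivP γ A (.seq (.gc (.or Φ₁ Φ₂) .eps) z)
        (.alt (.seq (.gc Φ₁ .eps) z) (.seq (.gc Φ₂ .eps) z)) :=
      (DerivP.congr_seq (.GC7 ..) (.refl z)).trans (.A4 ..)
    exact ⟨.or Φ₁ Φ₂, .alt w₁ w₂, hΦ₁.or hΦ₂, .alt hw₁ hw₂,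
      (DerivP.A4 ..).trans <| (DerivP.congr_alt d₁ d₂).trans <|
        (DerivP.alt_alt_comm ..).trans (.congr_alt dΦ.symm (.refl _))⟩

lemma HNF.hasHNF_iter {x y : PTerm Act S} (hx : HNF x) (hy : HNF y) :
    HasHNF γ A (.iter x y) := by
  obtain ⟨Φ, w, hΦ, hw, dsplit⟩ :=
    hx.exists_seq_eq_gc_eps_seq_alt (γ := γ) (A := A) (z := .iter x y) ⟨hx.closed, hy.closed⟩
  have hu : HNF (.alt w y) := .alt hw hy
  have unfold : DerivP γ A (.iter x y) (.alt (.seq (.gc Φ .eps) (.iter x y)) (.alt w y)) :=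
    (DerivP.BKS1 x y).trans ((DerivP.congr_alt dsplit (.refl y)).trans (.A2 ..))
  exact .of_derivP ((DerivP.RSP _ _ _ unfold).trans (DerivP.gc_alt_eq_iter hΦ.1 _).symm)
    ((hu.hasHNF_gc hΦ).alt hu.hasHNF)

namespace HasHNF

variable {p q : PTerm Act S}

lemma seq (hp : HasHNF γ A p) (hq : HasHNF γ A q) : HasHNF γ A (.seq p q) :=
  map₂ .congr_seq HNF.hasHNF_seq hp hq

lemma iter (hp : HasHNF γ A p) (hq : HasHNF γ A q) : HasHNF γ A (.iter p q) :=
  map₂ .congr_iter HNF.hasHNF_iter hp hq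

lemma lm (hp : HasHNF γ A p) (hq : HasHNF γ A q) : HasHNF γ A (.lm p q) :=
  map₂ .congr_lm (fun hp hq => hp.hasHNF_lm hq.closed) hp hq

lemma cm (hp : HasHNF γ A p) (hq : HasHNF γ A q) : HasHNF γ A (.cm p q) :=
  map₂ .congr_cm HNF.hasHNF_cm hp hq

lemma encap (H : Set Act) (hp : HasHNF γ A p) : HasHNF γ A (.encap H p) :=
  hp.map (.congr_encap H) (·.hasHNF_encap H)

lemma eval (σ : EvalMap S) (hp : HasHNF γ A p) : HasHNF γ A (.eval σ p) :=
  hp.map (.congr_eval σ) (·.hasHNF_eval σ)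

lemma par (hp : HasHNF γ A p) (hq : HasHNF γ A q) : HasHNF γ A (.par p q) :=
  .of_derivP (.CM1T p q) ((((hp.lm hq).alt (hq.lm hp)).alt (hp.cm hq)).alt
    ((hp.encap _).seq (hq.encap _)))

end HasHNF

end

theorem head_normal_form_general {Act : Type} {γ : Option Act → Option Act → Option Act}
    {S : DataSig} (A : DataAlg S) :
    ∀ p : PTerm Act S, p.Closed → ∃ q : PTerm Act S, HNF q ∧ DerivP γ A p q := by
  intro p hp
  show HasHNF γ A p
  induction p with
  | pvar => exact hp.elim
  | delta => exact HNF.delta.hasHNF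
  | eps => exact hasHNF_eps
  | act a => exact PAct.hasHNF (α := .base a) hp
  | pact a n es => exact PAct.hasHNF (α := .param a n es) hp
  | assign v e => exact PAct.hasHNF (α := .asg v e) hp
  | alt _ _ ihp ihq => exact (ihp hp.1).alt (ihq hp.2)
  | seq _ _ ihp ihq => exact (ihp hp.1).seq (ihq hp.2)
  | iter _ _ ihp ihq => exact (ihp hp.1).iter (ihq hp.2)
  | par _ _ ihp ihq => exact (ihp hp.1).par (ihq hp.2)
  | lm _ _ ihp ihq => exact (ihp hp.1).lm (ihq hp.2)
  | cm _ _ ihp ihq => exact (ihp hp.1).cm (ihq hp.2)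
  | encap H _ ih => exact (ih hp).encap H
  | gc _ _ ih => exact (ih hp.2).gc hp.1
  | eval σ _ ih => exact (ih hp).eval σ

/-- For every closed process term p of deACPei there is a head normal form q such that
p = q is derivable from the axioms of deACPei. -/
theorem head_normal_form {Act : Type} [Fintype Act] {γ : Option Act → Option Act → Option Act}
    (hγcomm : ∀ a b, γ a b = γ b a)
    (hγassoc : ∀ a b c, γ (γ a b) c = γ a (γ b c))
    (hγdelta : ∀ a, γ none a = none)
    {S : DataSig} (A : DataAlg S) (hmin : A.Minimal) :
    ∀ p : PTerm Act S, p.Closed → ∃ q : PTerm Act S, HNF q ∧ DerivP γ A p q :=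
  head_normal_form_general A

end DeACPei
end

section
/- The equation BKS2, x⊛(y·z) = (x⊛y)·z, is derivable from the axioms of ACPei (that is, it holds for all terms x, y, z of sort Proc in every model of the axioms of ACPei). -/
namespace ACPei

/-- A model of the axioms of ACPei (ACP with the empty process and iteration),
over a finite set `Act` of basic actions and a communication function
`γ : (Act ∪ {δ}) × (Act ∪ {δ}) → Act ∪ {δ}` (with `none` standing for `δ`).
The constants of `Act ∪ {δ}` are interpreted by `fun a => a.elim delta act`. -/
structure Model (Act : Type) (γ : Option Act → Option Act → Option Act) where
  Proc : Type
  delta : Proc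
  eps : Proc
  act : Act → Proc
  alt : Proc → Proc → Proc
  seq : Proc → Proc → Proc
  iter : Proc → Proc → Proc
  par : Proc → Proc → Proc
  lm : Proc → Proc → Proc
  cm : Proc → Proc → Proc
  encap : Set Act → Proc → Proc
  A1 : ∀ x y, alt x y = alt y x
  A2 : ∀ x y z, alt (alt x y) z = alt x (alt y z)
  A3 : ∀ x, alt x x = x
  A4 : ∀ x y z, seq (alt x y) z = alt (seq x z) (seq y z)
  A5 : ∀ x y z, seq (seq x y) z = seq x (seq y z)
  A6 : ∀ x, alt x delta = x
  A7 : ∀ x, seq delta x = delta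
  A8 : ∀ x, seq x eps = x
  A9 : ∀ x, seq eps x = x
  BKS1 : ∀ x y, iter x y = alt (seq x (iter x y)) y
  RSP : ∀ x y z, z = alt (seq x z) y → z = iter x y
  CM1T : ∀ x y, par x y =
    alt (alt (alt (lm x y) (lm y x)) (cm x y))
      (seq (encap Set.univ x) (encap Set.univ y))
  CM2T : ∀ x, lm eps x = delta
  CM3 : ∀ (a : Option Act) x y,
    lm (seq (a.elim delta act) x) y = seq (a.elim delta act) (par x y)
  CM4 : ∀ x y z, lm (alt x y) z = alt (lm x z) (lm y z)
  CM5T : ∀ x, cm eps x = delta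
  CM6T : ∀ x, cm x eps = delta
  CM7 : ∀ (a b : Option Act) x y,
    cm (seq (a.elim delta act) x) (seq (b.elim delta act) y) =
      seq ((γ a b).elim delta act) (par x y)
  CM8 : ∀ x y z, cm (alt x y) z = alt (cm x z) (cm y z)
  CM9 : ∀ x y z, cm x (alt y z) = alt (cm x y) (cm x z)
  D0 : ∀ H, encap H eps = eps
  D1 : ∀ (H : Set Act) (a : Option Act), (∀ b, a = some b → b ∉ H) →
    encap H (a.elim delta act) = a.elim delta act
  D2 : ∀ (H : Set Act) (a : Act), a ∈ H → encap H (act a) = delta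
  D3 : ∀ H x y, encap H (alt x y) = alt (encap H x) (encap H y)
  D4 : ∀ H x y, encap H (seq x y) = seq (encap H x) (encap H y)

end ACPei

/-- BKS2: `x ⊛ (y · z) = (x ⊛ y) · z` holds in every model of the axioms of ACPei. -/
theorem BKS2 {Act : Type} [Fintype Act] {γ : Option Act → Option Act → Option Act}
    (hγcomm : ∀ a b, γ a b = γ b a)
    (hγassoc : ∀ a b c, γ (γ a b) c = γ a (γ b c))
    (hγdelta : ∀ a, γ none a = none)
    (M : ACPei.Model Act γ) :
    ∀ x y z : M.Proc, M.iter x (M.seq y z) = M.seq (M.iter x y) z := by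
  intro x y z
  refine (M.RSP x (M.seq y z) (M.seq (M.iter x y) z) ?_).symm
  calc M.seq (M.iter x y) z
      = M.seq (M.alt (M.seq x (M.iter x y)) y) z := by rw [← M.BKS1]
    _ = M.alt (M.seq (M.seq x (M.iter x y)) z) (M.seq y z) := M.A4 _ _ _
    _ = M.alt (M.seq x (M.seq (M.iter x y) z)) (M.seq y z) := by rw [M.A5]
end

section
/- Assume the data algebra 𝔇 is the additive group of integers with constants for all integers, where e − e' abbreviates e + (−e'), and let i and j be distinct flexible variables. Then for all closed integer terms e and e' and for every {i,j}-evaluation map σ, the equation V_σ((i=e ∧ j=e') :→ [i:=i+j]·[j:=i−j]·[i:=i−j]) = V_σ((i=e ∧ j=e') :→ [i:=i+j]·[j:=i−j]·[i:=i−j]·((i=e' ∧ j=e) :→ ε)) is derivable from the axioms of deACPei; equivalently, (i=e ∧ j=e') :→ p ≈_{{i,j}} ((i=e ∧ j=e') :→ p)·((i=e' ∧ j=e) :→ ε) where p = [i:=i+j]·[j:=i−j]·[i:=i−j]. -/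
namespace DeACPei

/-- Function symbols of the data signature of the additive group of integers: a
constant for every integer, addition, and additive inverse. -/
inductive GrpF : Type where
  | const : ℤ → GrpF
  | add : GrpF
  | neg : GrpF

/-- The data signature of the additive group of integers with constants for all
integers (no relation symbols besides equality). -/
abbrev grpSig : DataSig where
  F := GrpF
  ar := fun f => match f with
    | .const _ => 0
    | .add => 2
    | .neg => 1
  R := Empty
  rar := fun r => nomatch r

/-- The data algebra 𝔇: the additive group of integers. -/
def grpAlg : DataAlg grpSig where
  D := ℤ
  interpF := fun f => match f with
    | .const z => fun _ => z
    | .add => fun ts => ts 0 + ts 1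
    | .neg => fun ts => - ts 0
  interpR := fun r => nomatch r

/-- The constant term denoting the integer z. -/
def cnst (z : ℤ) : DTerm grpSig := .app (.const z) (fun i => i.elim0)

theorem cnst_isVal (z : ℤ) : (cnst z).IsVal :=
  ⟨fun i => i.elim0, fun i => i.elim0⟩

/-- e + e'. -/
def addT (e e' : DTerm grpSig) : DTerm grpSig := .app .add ![e, e']

/-- −e. -/
def negT (e : DTerm grpSig) : DTerm grpSig := .app .neg ![e]

/-- e − e', an abbreviation of e + (−e'). -/
def subT (e e' : DTerm grpSig) : DTerm grpSig := addT e (negT e')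

/-- The process [i:=i+j]·[j:=i−j]·[i:=i−j]. -/
def swapProc (i j : FlexVar) : PTerm Act grpSig :=
  .seq (.assign i (addT (.fvar i) (.fvar j)))
    (.seq (.assign j (subT (.fvar i) (.fvar j)))
      (.assign i (subT (.fvar i) (.fvar j))))

end DeACPei

namespace DeACPei

section Aux

variable {Act : Type} {γ : Option Act → Option Act → Option Act}

/-- Value of a data term of the integer signature (at the zero assignments). -/
def ival (e : DTerm grpSig) : ℤ := e.evalD grpAlg (fun _ => (0 : ℤ)) (fun _ => (0 : ℤ))

lemma evalD_eq_ival {e : DTerm grpSig} (h : e.IsVal) (ν μ) :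
    e.evalD grpAlg ν μ = ival e := by
  induction e with
  | dvar n => exact absurd h.1 (by simp [DTerm.NoDVar])
  | fvar v => exact absurd h.2 (by simp [DTerm.NoFVar])
  | app f ts ih =>
    simp only [DTerm.evalD, ival]
    congr 1
    funext k
    exact ih k ⟨h.1 k, h.2 k⟩

lemma applyEval_of_noFVar {e : DTerm grpSig} (h : e.NoFVar) (σ : EvalMap grpSig) :
    e.applyEval σ = e := by
  induction e with
  | dvar n => rfl
  | fvar v => exact absurd h (by simp [DTerm.NoFVar])
  | app f ts ih =>
    simp only [DTerm.applyEval]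
    congr 1
    funext k
    exact ih k (h k)

lemma addT_isVal {a b : DTerm grpSig} (ha : a.IsVal) (hb : b.IsVal) :
    (addT a b).IsVal := by
  refine ⟨fun k => ?_, fun k => ?_⟩ <;> fin_cases k
  · exact ha.1
  · exact hb.1
  · exact ha.2
  · exact hb.2

lemma negT_isVal {a : DTerm grpSig} (ha : a.IsVal) : (negT a).IsVal := by
  refine ⟨fun k => ?_, fun k => ?_⟩ <;> fin_cases k
  · exact ha.1
  · exact ha.2

lemma subT_isVal {a b : DTerm grpSig} (ha : a.IsVal) (hb : b.IsVal) :
    (subT a b).IsVal := addT_isVal ha (negT_isVal hb)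

lemma applyEval_addT (σ : EvalMap grpSig) (a b : DTerm grpSig) :
    (addT a b).applyEval σ = addT (a.applyEval σ) (b.applyEval σ) := by
  simp only [addT, DTerm.applyEval]
  congr 1
  funext k
  fin_cases k <;> rfl

lemma applyEval_negT (σ : EvalMap grpSig) (a : DTerm grpSig) :
    (negT a).applyEval σ = negT (a.applyEval σ) := by
  simp only [negT, DTerm.applyEval]
  congr 1
  funext k
  fin_cases k <;> rfl

lemma applyEval_subT (σ : EvalMap grpSig) (a b : DTerm grpSig) :
    (subT a b).applyEval σ = subT (a.applyEval σ) (b.applyEval σ) := by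
  rw [subT, applyEval_addT, applyEval_negT]; rfl

lemma ival_addT (a b : DTerm grpSig) : ival (addT a b) = ival a + ival b := rfl

lemma ival_negT (a : DTerm grpSig) : ival (negT a) = - ival a := rfl

lemma ival_subT (a b : DTerm grpSig) : ival (subT a b) = ival a - ival b := by
  show ival a + - ival b = _ ; ring

lemma upd_same (σ : EvalMap grpSig) (v : FlexVar) {t : DTerm grpSig} (h : t.IsVal) :
    σ.upd v t v = some ⟨t, h⟩ := by
  simp [EvalMap.upd, h]

lemma upd_ne (σ : EvalMap grpSig) (v : FlexVar) (t : DTerm grpSig) {w : FlexVar}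
    (h : w ≠ v) : σ.upd v t w = σ w := by
  simp [EvalMap.upd, h]

lemma applyEval_fvar {σ : EvalMap grpSig} {v : FlexVar} {d : DVal grpSig}
    (h : σ v = some d) : (DTerm.fvar v).applyEval σ = d.val := by
  simp [DTerm.applyEval, h]

/-- Normal form of the evaluation of a sequence of three assignments followed by q. -/
lemma eval_seq3 (σ : EvalMap grpSig) (v1 v2 v3 : FlexVar) (e1 e2 e3 : DTerm grpSig)
    (q : PTerm Act grpSig) :
    DerivP γ grpAlg
      (.eval σ (.seq (.seq (.assign v1 e1)
        (.seq (.assign v2 e2) (.assign v3 e3))) q))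
      (.seq (.assign v1 (e1.applyEval σ))
        (.seq (.assign v2 (e2.applyEval (σ.upd v1 (e1.applyEval σ))))
          (.seq (.assign v3 (e3.applyEval
              ((σ.upd v1 (e1.applyEval σ)).upd v2
                (e2.applyEval (σ.upd v1 (e1.applyEval σ))))))
            (.eval (((σ.upd v1 (e1.applyEval σ)).upd v2
                (e2.applyEval (σ.upd v1 (e1.applyEval σ)))).upd v3
                (e3.applyEval ((σ.upd v1 (e1.applyEval σ)).upd v2
                  (e2.applyEval (σ.upd v1 (e1.applyEval σ)))))) q)))) := by
  refine .trans (.congr_eval σ (.A5 _ _ _)) ?_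
  refine .trans (.V3 _ _ _ _) ?_
  refine .congr_seq (.refl _) ?_
  refine .trans (.congr_eval _ (.A5 _ _ _)) ?_
  refine .trans (.V3 _ _ _ _) ?_
  refine .congr_seq (.refl _) ?_
  exact .V3 _ _ _ _

end Aux

/-- With the data algebra being the additive group of integers and i, j distinct
flexible variables: for all closed integer terms e, e', the process
(i=e ∧ j=e') :→ [i:=i+j]·[j:=i−j]·[i:=i−j] is equivalent under {i,j}-evaluation to
((i=e ∧ j=e') :→ [i:=i+j]·[j:=i−j]·[i:=i−j])·((i=e' ∧ j=e) :→ ε), i.e. for every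
{i,j}-evaluation map σ the corresponding equation between the evaluated processes is
derivable from the axioms of deACPei. -/
theorem swap_example
    {Act : Type} [Fintype Act] {γ : Option Act → Option Act → Option Act}
    (hγcomm : ∀ a b, γ a b = γ b a)
    (hγassoc : ∀ a b c, γ (γ a b) c = γ a (γ b c))
    (hγdelta : ∀ a, γ none a = none)
    (i j : FlexVar) (hij : i ≠ j)
    (e e' : DTerm grpSig) (he : e.IsVal) (he' : e'.IsVal) :
    EvalEquiv (Act := Act) γ grpAlg {i, j}
      (.gc ((CTerm.eq (.fvar i) e).and (CTerm.eq (.fvar j) e')) (swapProc i j))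
      (.seq
        (.gc ((CTerm.eq (.fvar i) e).and (CTerm.eq (.fvar j) e')) (swapProc i j))
        (.gc ((CTerm.eq (.fvar i) e').and (CTerm.eq (.fvar j) e)) .eps)) := by
  intro σ hσ
  obtain ⟨di, hdi⟩ := Option.isSome_iff_exists.mp ((hσ i).mpr (by simp))
  obtain ⟨dj, hdj⟩ := Option.isSome_iff_exists.mp ((hσ j).mpr (by simp))
  have h1 : (addT di.val dj.val).IsVal := addT_isVal di.2 dj.2
  have h2 : (subT (addT di.val dj.val) dj.val).IsVal := subT_isVal h1 dj.2
  have h3 : (subT (addT di.val dj.val) (subT (addT di.val dj.val) dj.val)).IsVal :=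
    subT_isVal h1 h2
  -- abbreviations for the three successive evaluation maps
  have hA1 : (addT (.fvar i) (.fvar j)).applyEval σ = addT di.val dj.val := by
    rw [applyEval_addT, applyEval_fvar hdi, applyEval_fvar hdj]
  have hσ1i : (σ.upd i (addT di.val dj.val)) i = some ⟨addT di.val dj.val, h1⟩ :=
    upd_same σ i h1
  have hσ1j : (σ.upd i (addT di.val dj.val)) j = some dj :=
    (upd_ne σ i _ (Ne.symm hij)).trans hdj
  have hA2 : (subT (.fvar i) (.fvar j)).applyEval (σ.upd i (addT di.val dj.val))
      = subT (addT di.val dj.val) dj.val := by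
    rw [applyEval_subT, applyEval_fvar hσ1i, applyEval_fvar hσ1j]
  have hσ2i : ((σ.upd i (addT di.val dj.val)).upd j (subT (addT di.val dj.val) dj.val)) i
      = some ⟨addT di.val dj.val, h1⟩ :=
    (upd_ne _ j _ hij).trans hσ1i
  have hσ2j : ((σ.upd i (addT di.val dj.val)).upd j (subT (addT di.val dj.val) dj.val)) j
      = some ⟨subT (addT di.val dj.val) dj.val, h2⟩ :=
    upd_same _ j h2
  have hA3 : (subT (.fvar i) (.fvar j)).applyEval
        ((σ.upd i (addT di.val dj.val)).upd j (subT (addT di.val dj.val) dj.val))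
      = subT (addT di.val dj.val) (subT (addT di.val dj.val) dj.val) := by
    rw [applyEval_subT, applyEval_fvar hσ2i, applyEval_fvar hσ2j]
  set σ3 := (((σ.upd i (addT di.val dj.val)).upd j
      (subT (addT di.val dj.val) dj.val)).upd i
      (subT (addT di.val dj.val) (subT (addT di.val dj.val) dj.val))) with hσ3def
  have hσ3i : σ3 i
      = some ⟨subT (addT di.val dj.val) (subT (addT di.val dj.val) dj.val), h3⟩ :=
    upd_same _ i h3
  have hσ3j : σ3 j = some ⟨subT (addT di.val dj.val) dj.val, h2⟩ :=
    (upd_ne _ i _ (Ne.symm hij)).trans hσ2j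
  -- the normalized evaluation of the swap process
  have key : ∀ q : PTerm Act grpSig,
      DerivP γ grpAlg (.eval σ (.seq (swapProc i j) q))
        (.seq (.assign i (addT di.val dj.val))
          (.seq (.assign j (subT (addT di.val dj.val) dj.val))
            (.seq (.assign i
                (subT (addT di.val dj.val) (subT (addT di.val dj.val) dj.val)))
              (.eval σ3 q)))) := by
    intro q
    have h := eval_seq3 (γ := γ) σ i j i (addT (.fvar i) (.fvar j))
      (subT (.fvar i) (.fvar j)) (subT (.fvar i) (.fvar j)) q
    rw [hA1, hA2, hA3] at h
    exact h
  -- the two sides, normalized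
  have L : DerivP γ grpAlg
      (.eval σ (.gc ((CTerm.eq (.fvar i) e).and (CTerm.eq (.fvar j) e'))
        (swapProc i j)))
      (.gc (((CTerm.eq (.fvar i) e).and (CTerm.eq (.fvar j) e')).applyEval σ)
        (.seq (.assign i (addT di.val dj.val))
          (.seq (.assign j (subT (addT di.val dj.val) dj.val))
            (.seq (.assign i
                (subT (addT di.val dj.val) (subT (addT di.val dj.val) dj.val)))
              .eps)))) := by
    refine .trans (.congr_eval σ (.congr_gc (.refl _) (.symm (.A8 _)))) ?_
    refine .trans (.V5 _ _ _) ?_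
    refine .congr_gc (.refl _) ?_
    refine .trans (key .eps) ?_
    exact .congr_seq (.refl _) (.congr_seq (.refl _) (.congr_seq (.refl _) (.V0 _)))
  have R : DerivP γ grpAlg
      (.eval σ (.seq
        (.gc ((CTerm.eq (.fvar i) e).and (CTerm.eq (.fvar j) e')) (swapProc i j))
        (.gc ((CTerm.eq (.fvar i) e').and (CTerm.eq (.fvar j) e)) .eps)))
      (.gc (((CTerm.eq (.fvar i) e).and (CTerm.eq (.fvar j) e')).applyEval σ)
        (.seq (.assign i (addT di.val dj.val))
          (.seq (.assign j (subT (addT di.val dj.val) dj.val))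
            (.seq (.assign i
                (subT (addT di.val dj.val) (subT (addT di.val dj.val) dj.val)))
              (.gc (((CTerm.eq (.fvar i) e').and (CTerm.eq (.fvar j) e)).applyEval σ3)
                .eps))))) := by
    refine .trans (.congr_eval σ (.GC5 _ _ _)) ?_
    refine .trans (.V5 _ _ _) ?_
    refine .congr_gc (.refl _) ?_
    refine .trans (key (.gc _ .eps)) ?_
    refine .congr_seq (.refl _) (.congr_seq (.refl _) (.congr_seq (.refl _) ?_))
    exact .trans (.V5 _ _ _) (.congr_gc (.refl _) (.V0 _))
  -- arithmetic facts
  have hv2 : ival (subT (addT di.val dj.val) dj.val) = ival di.val := by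
    rw [ival_subT, ival_addT]; ring
  have hv3 : ival (subT (addT di.val dj.val) (subT (addT di.val dj.val) dj.val))
      = ival dj.val := by
    rw [ival_subT, ival_subT, ival_addT]; ring
  have hψ3 : ((CTerm.eq (.fvar i) e').and (CTerm.eq (.fvar j) e)).applyEval σ3
      = (CTerm.eq (subT (addT di.val dj.val) (subT (addT di.val dj.val) dj.val)) e').and
          (CTerm.eq (subT (addT di.val dj.val) dj.val) e) := by
    simp only [CTerm.applyEval]
    rw [applyEval_fvar hσ3i, applyEval_fvar hσ3j, applyEval_of_noFVar he'.2,
      applyEval_of_noFVar he.2]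
  have hφσ : (((CTerm.eq (.fvar i) e).and (CTerm.eq (.fvar j) e')).applyEval σ)
      = (CTerm.eq di.val e).and (CTerm.eq dj.val e') := by
    simp only [CTerm.applyEval]
    rw [applyEval_fvar hdi, applyEval_fvar hdj, applyEval_of_noFVar he.2,
      applyEval_of_noFVar he'.2]
  by_cases hc : ival di.val = ival e ∧ ival dj.val = ival e'
  · -- the guard holds, hence the final condition is derivably true
    have hT : DerivC grpAlg
        (((CTerm.eq (.fvar i) e').and (CTerm.eq (.fvar j) e)).applyEval σ3) .tt := by
      rw [hψ3]
      refine .imp2 ⟨trivial, trivial⟩ trivial ?_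
      intro μ ν
      simp only [CTerm.holds]
      rw [evalD_eq_ival h3, evalD_eq_ival h2, evalD_eq_ival he, evalD_eq_ival he']
      exact iff_of_true ⟨by rw [hv3, hc.2], by rw [hv2, hc.1]⟩ trivial
    have R' := R.trans (.congr_gc (.refl _) (.congr_seq (.refl _)
      (.congr_seq (.refl _) (.congr_seq (.refl _)
        (.trans (.congr_gc hT (.refl _)) (.GC1 _))))))
    exact L.trans R'.symm
  · -- the guard fails, hence both sides are derivably δ
    have hF : DerivC grpAlg
        (((CTerm.eq (.fvar i) e).and (CTerm.eq (.fvar j) e')).applyEval σ) .ff := by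
      rw [hφσ]
      refine .imp2 ⟨trivial, trivial⟩ trivial ?_
      intro μ ν
      simp only [CTerm.holds]
      rw [evalD_eq_ival di.2, evalD_eq_ival dj.2, evalD_eq_ival he, evalD_eq_ival he']
      exact iff_of_false hc fun h => h
    have L' := L.trans (.trans (.congr_gc hF (.refl _)) (.GC2 _))
    have R' := R.trans (.trans (.congr_gc hF (.refl _)) (.GC2 _))
    exact L'.trans R'.symm

end DeACPei
end
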